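/- arXiv:1804.11114 — 4 statements merged into one kernel-verified Lean document; each statement's English description precedes it below -/
import Mathlib

section
/- Suppose all maps f_α : M → M (α ∈ A) preserve the same probability measure λ on M, and the partition elements G_w (w ∈ W) do not depend on α. Then the probability measure P₀ = P × λ on Ω × M is invariant under the map F(ω, x) = (τ_{e(x)} ω, f_{ω_{e(x)}}(x)), where e(x) = Σ_{w ∈ W} 1_{G_w}(x)·w and P is a translation-invariant probability measure on Ω = A^{Z^d}. -/
/-!
Writing `τ_z ω = ω(· + z)`, the map factors as `F = Φ ∘ Ψ` with `Ψ(ω, x) = (τ_{e x} ω, x)` and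
`Φ(ω, x) = (ω, f_{ω 0} x)`, because `(τ_z ω) 0 = ω z`. Each factor is a skew product whose fibre
maps preserve the corresponding marginal (`τ_z` preserves `P`, `f_α` preserves `λ`), so each
preserves `P × λ`.
-/

open MeasureTheory Function

namespace MeasureTheory

variable {α β γ : Type*} [MeasurableSpace α] [MeasurableSpace β] [MeasurableSpace γ]

theorem MeasurePreserving.skew_product_left {μ : Measure α} {ν : Measure β} [SFinite μ]
    [SFinite ν] {g : β → α → α} (hgm : Measurable (uncurry g))
    (hg : ∀ b, Measure.map (g b) μ = μ) :
    MeasurePreserving (fun p : α × β => (g p.2 p.1, p.2)) (μ.prod ν) (μ.prod ν) :=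
  Measure.measurePreserving_swap.comp <|
    ((MeasurePreserving.id ν).skew_product hgm (ae_of_all _ hg)).comp
      Measure.measurePreserving_swap

theorem measurable_uncurry_comp_of_countable {ι : Type*} [MeasurableSpace ι] [Countable ι]
    [MeasurableSingletonClass ι] {τ : ι → α → γ} (hτ : ∀ i, Measurable (τ i)) {e : β → ι}
    (he : Measurable e) : Measurable (uncurry fun b => τ (e b)) := by
  have hτm : Measurable fun p : α × ι => τ p.2 p.1 := measurable_from_prod_countable_left hτ
  exact hτm.comp (measurable_snd.prodMk (he.comp measurable_fst))

theorem measurable_uncurry_of_measurable_env {A ι : Type*} [MeasurableSpace A] {f : A → α → γ}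
    {e : α → ι} (h : Measurable fun p : (ι → A) × α => f (p.1 (e p.2)) p.2) :
    Measurable (uncurry f) :=
  h.comp ((measurable_pi_lambda _ fun _ => measurable_fst).prodMk measurable_snd)

end MeasureTheory

theorem stmt1_general {A M : Type*} [MeasurableSpace A] [MeasurableSpace M] {d : ℕ}
    (f : A → M → M) (e : M → Fin d → ℤ)
    (P : Measure ((Fin d → ℤ) → A)) (lam : Measure M)
    [IsProbabilityMeasure P] [IsProbabilityMeasure lam]
    (hPinv : ∀ z : Fin d → ℤ,
      Measure.map (fun ω : (Fin d → ℤ) → A => fun v => ω (v + z)) P = P)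
    (hlaminv : ∀ α : A, Measure.map (f α) lam = lam)
    (hmease : Measurable e)
    (hFmeas : Measurable (fun pt : ((Fin d → ℤ) → A) × M =>
      ((fun v => pt.1 (v + e pt.2), f (pt.1 (e pt.2)) pt.2) :
        ((Fin d → ℤ) → A) × M))) :
    Measure.map (fun pt : ((Fin d → ℤ) → A) × M =>
      ((fun v => pt.1 (v + e pt.2), f (pt.1 (e pt.2)) pt.2) :
        ((Fin d → ℤ) → A) × M)) (P.prod lam) = P.prod lam := by
  have hτ (z : Fin d → ℤ) : Measurable fun ω : (Fin d → ℤ) → A => fun v => ω (v + z) :=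
    measurable_pi_lambda _ fun v => measurable_pi_apply (v + z)
  have hΨ : MeasurePreserving (fun p : ((Fin d → ℤ) → A) × M => (fun v => p.1 (v + e p.2), p.2))
      (P.prod lam) (P.prod lam) :=
    MeasurePreserving.skew_product_left (measurable_uncurry_comp_of_countable hτ hmease)
      (fun x => hPinv (e x))
  have hΦ : MeasurePreserving (fun p : ((Fin d → ℤ) → A) × M => (p.1, f (p.1 0) p.2))
      (P.prod lam) (P.prod lam) :=
    (MeasurePreserving.id P).skew_product (g := fun ω => f (ω 0))
      ((measurable_uncurry_of_measurable_env hFmeas.snd).comp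
        (f := fun p : ((Fin d → ℤ) → A) × M => (p.1 0, p.2)) (by fun_prop))
      (ae_of_all _ fun ω => hlaminv (ω 0))
  convert (hΦ.comp hΨ).map_eq using 3 with p
  simp only [comp_apply, zero_add]

/-- If all local maps `f α` preserve the same probability measure `lam` and the
partition `{G w}` (gates) is deterministic (independent of `α`, encoded by the jump function
`e` with `x ∈ G w ↔ e x = w`), then the product measure `P × lam` on `Ω × M` is invariant
under the environment-seen-from-the-particle map
`F(ω, x) = (τ_{e x} ω, f_{ω_{e x}} x)`, where `P` is a translation-invariant probability
measure on `Ω = A^{ℤ^d}`. -/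
theorem stmt1 {A M : Type*} [MeasurableSpace A] [MeasurableSpace M] {d : ℕ}
    (W : Finset (Fin d → ℤ)) (G : (Fin d → ℤ) → Set M)
    (f : A → M → M) (e : M → Fin d → ℤ)
    (P : Measure ((Fin d → ℤ) → A)) (lam : Measure M)
    [IsProbabilityMeasure P] [IsProbabilityMeasure lam]
    (hPinv : ∀ z : Fin d → ℤ,
      Measure.map (fun ω : (Fin d → ℤ) → A => fun v => ω (v + z)) P = P)
    (hlaminv : ∀ α : A, Measure.map (f α) lam = lam)
    (hmeasf : ∀ α : A, Measurable (f α))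
    (hmease : Measurable e)
    (hGmeas : ∀ w, MeasurableSet (G w))
    (hG : ∀ (x : M) (w : Fin d → ℤ), x ∈ G w ↔ e x = w)
    (heW : ∀ x, e x ∈ W)
    (hFmeas : Measurable (fun pt : ((Fin d → ℤ) → A) × M =>
      ((fun v => pt.1 (v + e pt.2), f (pt.1 (e pt.2)) pt.2) :
        ((Fin d → ℤ) → A) × M))) :
    Measure.map (fun pt : ((Fin d → ℤ) → A) × M =>
      ((fun v => pt.1 (v + e pt.2), f (pt.1 (e pt.2)) pt.2) :
        ((Fin d → ℤ) → A) × M)) (P.prod lam) = P.prod lam :=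
  stmt1_general f e P lam hPinv hlaminv hmease hFmeas
end

section
/- Assume the conditional jump probabilities satisfy the weak-memory condition (Exp): there exist C* > 0 and ν ∈ (0,1) such that for P-a.e. ω, all n > m ≥ 0 and all sequences w̄ ∈ W^N, |P_ω(w̄_n | w̄_0 … w̄_{n-1}) − P_{τ_{z_m} ω}(w̄_n | w̄_m … w̄_{n-1})| ≤ C* ν^{n−m}, where z_m = w̄_0 + … + w̄_{m−1}. Then there exists C > 0 such that for all n ≥ m, |P*(z_{n+1} | z_{n−m+1}, …, z_n, ω) − P*(z_{n+1} | z_1, …, z_n, ω)| ≤ C ν^m, i.e. the process loses memory of the distant past exponentially fast. -/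
open MeasureTheory Filter Finset

/-!
Conditioning only on the last `m` positions amounts to averaging the conditional jump
probability over all admissible histories of the first `n - m + 1` jumps that arrive at the
same position, weighted by their probabilities. By (Exp) applied at time `n - m + 1`, each of
these conditional probabilities, as well as the one of the true history, lies within
`C* ν^(m-1)` of the conditional probability for the environment seen from that common position,
and so does their weighted average. For `m ≤ 1` it suffices that all of them lie in `[0, 1]`.
-/

theorem abs_sum_div_sum_sub_le {ι : Type*} {s : Finset ι} (hs : s.Nonempty) {a b : ι → ℝ}
    (hb : ∀ i ∈ s, 0 < b i) {Q ε : ℝ} (h : ∀ i ∈ s, |a i / b i - Q| ≤ ε) :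
    |(∑ i ∈ s, a i) / (∑ i ∈ s, b i) - Q| ≤ ε := by
  have hB : 0 < ∑ i ∈ s, b i := sum_pos hb hs
  have hterm : ∀ i ∈ s, |a i - Q * b i| ≤ ε * b i := by
    intro i hi
    have hbi := hb i hi
    rw [show a i - Q * b i = b i * (a i / b i - Q) by field_simp, abs_mul, abs_of_pos hbi,
      mul_comm]
    exact mul_le_mul_of_nonneg_right (h i hi) hbi.le
  have hsum : |(∑ i ∈ s, a i) - Q * ∑ i ∈ s, b i| ≤ ε * ∑ i ∈ s, b i := by
    rw [mul_sum, ← sum_sub_distrib, mul_sum]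
    exact (abs_sum_le_sum_abs _ _).trans (sum_le_sum hterm)
  rw [show (∑ i ∈ s, a i) / (∑ i ∈ s, b i) - Q
      = ((∑ i ∈ s, a i) - Q * ∑ i ∈ s, b i) / (∑ i ∈ s, b i) by field_simp,
    abs_div, abs_of_pos hB, div_le_iff₀ hB]
  exact hsum

section Words

variable {α : Type*} {W : Finset α}

/-- The paper's `P_ω(g n | g 0 … g (n-1))` for `q = p ω`. -/
noncomputable def condProb (q : List α → ℝ) (g : ℕ → α) (n : ℕ) : ℝ :=
  q (List.ofFn fun k : Fin (n + 1) => g k) / q (List.ofFn fun k : Fin n => g k)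

def replacePrefix {N : ℕ} (u : Fin N → W) (g : ℕ → α) (k : ℕ) : α :=
  if h : k < N then (u ⟨k, h⟩ : α) else g k

def pathsTo [AddCommMonoid α] [DecidableEq α] (W : Finset α) (N : ℕ) (z : α) :
    Finset (Fin N → W) :=
  univ.filter fun u => ∑ k, (u k : α) = z

theorem mem_pathsTo [AddCommMonoid α] [DecidableEq α] {N : ℕ} {z : α} {u : Fin N → W} :
    u ∈ pathsTo W N z ↔ ∑ k, (u k : α) = z := by
  simp [pathsTo]

theorem replacePrefix_mem {N : ℕ} (u : Fin N → W) {g : ℕ → α} (hg : ∀ k, g k ∈ W) (k : ℕ) :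
    replacePrefix u g k ∈ W := by
  unfold replacePrefix
  split
  · exact (u _).2
  · exact hg k

theorem replacePrefix_add {N : ℕ} (u : Fin N → W) (g : ℕ → α) (k : ℕ) :
    replacePrefix u g (N + k) = g (N + k) :=
  dif_neg (by omega)

theorem sum_range_replacePrefix [AddCommMonoid α] {N : ℕ} (u : Fin N → W) (g : ℕ → α) :
    ∑ k ∈ range N, replacePrefix u g k = ∑ k, (u k : α) := by
  rw [← Fin.sum_univ_eq_sum_range]
  exact sum_congr rfl fun k _ => dif_pos k.isLt

theorem List.ofFn_succ_eq_append (g : ℕ → α) (n : ℕ) :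
    List.ofFn (fun k : Fin (n + 1) => g k) = List.ofFn (fun k : Fin n => g k) ++ [g n] := by
  rw [List.ofFn_succ', List.concat_eq_append]
  simp

theorem List.forall_mem_ofFn {g : ℕ → α} (hg : ∀ k, g k ∈ W) (n : ℕ) :
    ∀ v ∈ List.ofFn (fun k : Fin n => g k), v ∈ W := by
  simp only [List.mem_ofFn]
  rintro v ⟨k, rfl⟩
  exact hg k

variable {q : List α → ℝ}

theorem apply_append_singleton_le (hCompat : ∀ l, q l = ∑ w ∈ W, q (l ++ [w]))
    (hPos : ∀ l : List α, (∀ v ∈ l, v ∈ W) → 0 < q l) {l : List α} (hl : ∀ v ∈ l, v ∈ W)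
    {w : α} (hw : w ∈ W) : q (l ++ [w]) ≤ q l := by
  have hadm : ∀ w' ∈ W, ∀ v ∈ l ++ [w'], v ∈ W := by
    intro w' hw' v hv
    rcases List.mem_append.mp hv with hv | hv
    · exact hl v hv
    · exact List.mem_singleton.mp hv ▸ hw'
  rw [hCompat l]
  exact single_le_sum (f := fun w' => q (l ++ [w'])) (fun w' hw' => (hPos _ (hadm w' hw')).le) hw

theorem abs_condProb_sub_half_le (hCompat : ∀ l, q l = ∑ w ∈ W, q (l ++ [w]))
    (hPos : ∀ l : List α, (∀ v ∈ l, v ∈ W) → 0 < q l) {g : ℕ → α} (hg : ∀ k, g k ∈ W)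
    (n : ℕ) : |condProb q g n - 1 / 2| ≤ 1 / 2 := by
  have hden := hPos _ (List.forall_mem_ofFn hg n)
  have hnum := hPos _ (List.forall_mem_ofFn hg (n + 1))
  have hle := apply_append_singleton_le hCompat hPos (List.forall_mem_ofFn hg n) (hg n)
  rw [← List.ofFn_succ_eq_append] at hle
  have h0 : 0 ≤ condProb q g n := div_nonneg hnum.le hden.le
  have h1 : condProb q g n ≤ 1 := div_le_one_of_le₀ hle hden.le
  rw [abs_le]
  constructor <;> linarith

theorem abs_mixture_sub_condProb_le (hPos : ∀ l : List α, (∀ v ∈ l, v ∈ W) → 0 < q l)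
    {N : ℕ} {F : Finset (Fin N → W)} (hF : F.Nonempty) {g : ℕ → α} (hg : ∀ k, g k ∈ W)
    {n : ℕ} {Q ε : ℝ} (hmix : ∀ u ∈ F, |condProb q (replacePrefix u g) n - Q| ≤ ε)
    (hQ : |condProb q g n - Q| ≤ ε) :
    |(∑ u ∈ F, q (List.ofFn fun k : Fin (n + 1) => replacePrefix u g k)) /
        (∑ u ∈ F, q (List.ofFn fun k : Fin n => replacePrefix u g k)) - condProb q g n|
      ≤ 2 * ε := by
  have hden : ∀ u ∈ F, 0 < q (List.ofFn fun k : Fin n => replacePrefix u g k) :=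
    fun u _ => hPos _ (List.forall_mem_ofFn (replacePrefix_mem u hg) n)
  calc _ ≤ _ := abs_sub_le _ Q _
    _ ≤ ε + ε := add_le_add (abs_sum_div_sum_sub_le hF hden hmix) (abs_sub_comm Q _ ▸ hQ)
    _ = 2 * ε := by ring

end Words

theorem stmt3_general {A : Type*} [MeasurableSpace A] {d : ℕ}
    (W : Finset (Fin d → ℤ))
    (P : Measure ((Fin d → ℤ) → A))
    (p : ((Fin d → ℤ) → A) → List (Fin d → ℤ) → ℝ)
    (hCompat : ∀ ω l, p ω l = ∑ w ∈ W, p ω (l ++ [w]))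
    (hPos : ∀ᵐ ω ∂P, ∀ l : List (Fin d → ℤ), (∀ v ∈ l, v ∈ W) → 0 < p ω l)
    (Cstar ν : ℝ) (hν : ν ∈ Set.Ioo (0 : ℝ) 1)
    (hExp : ∀ᵐ ω ∂P, ∀ wb : ℕ → Fin d → ℤ, (∀ k, wb k ∈ W) →
      ∀ m n : ℕ, m < n →
        |p ω (List.ofFn fun k : Fin (n + 1) => wb (k : ℕ)) /
            p ω (List.ofFn fun k : Fin n => wb (k : ℕ)) -
          p (fun v => ω (v + ∑ k ∈ range m, wb k))
              (List.ofFn fun k : Fin (n - m + 1) => wb (m + (k : ℕ))) /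
            p (fun v => ω (v + ∑ k ∈ range m, wb k))
              (List.ofFn fun k : Fin (n - m) => wb (m + (k : ℕ)))| ≤ Cstar * ν ^ (n - m)) :
    ∃ C > 0, ∀ᵐ ω ∂P, ∀ wb : ℕ → Fin d → ℤ, (∀ k, wb k ∈ W) →
      ∀ m n : ℕ, m ≤ n →
        |(∑ u ∈ Finset.univ.filter (fun u : Fin (n - m + 1) → W =>
              (∑ k, (u k : Fin d → ℤ)) = ∑ k ∈ range (n - m + 1), wb k),
            p ω (List.ofFn fun k : Fin (n + 1) =>
              if h : (k : ℕ) < n - m + 1 then (u ⟨(k : ℕ), h⟩ : Fin d → ℤ)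
              else wb (k : ℕ))) /
          (∑ u ∈ Finset.univ.filter (fun u : Fin (n - m + 1) → W =>
              (∑ k, (u k : Fin d → ℤ)) = ∑ k ∈ range (n - m + 1), wb k),
            p ω (List.ofFn fun k : Fin n =>
              if h : (k : ℕ) < n - m + 1 then (u ⟨(k : ℕ), h⟩ : Fin d → ℤ)
              else wb (k : ℕ))) -
          p ω (List.ofFn fun k : Fin (n + 1) => wb (k : ℕ)) /
            p ω (List.ofFn fun k : Fin n => wb (k : ℕ))| ≤ C * ν ^ m := by

  obtain ⟨hν0, hν1⟩ := hν
  refine ⟨max 1 (2 * Cstar) / ν, by positivity, ?_⟩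
  filter_upwards [hPos, hExp] with ω hpos hexp wb hwb m n hmn
  set N := n - m + 1
  have hF : (pathsTo W N (∑ k ∈ range N, wb k)).Nonempty :=
    ⟨fun k => ⟨wb k, hwb k⟩, mem_pathsTo.2 (Fin.sum_univ_eq_sum_range wb N)⟩
  suffices ∃ Q ε : ℝ, (∀ u ∈ pathsTo W N (∑ k ∈ range N, wb k),
      |condProb (p ω) (replacePrefix u wb) n - Q| ≤ ε) ∧ |condProb (p ω) wb n - Q| ≤ ε ∧
      2 * ε ≤ max 1 (2 * Cstar) / ν * ν ^ m by
    obtain ⟨Q, ε, hmix, hQ, hε⟩ := this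
    exact (abs_mixture_sub_condProb_le hpos hF hwb hmix hQ).trans hε
  rcases le_or_gt m 1 with hm | hm
  · refine ⟨1 / 2, 1 / 2, fun u _ => abs_condProb_sub_half_le (hCompat ω) hpos
      (replacePrefix_mem u hwb) n, abs_condProb_sub_half_le (hCompat ω) hpos hwb n, ?_⟩
    calc 2 * (1 / 2 : ℝ) ≤ max 1 (2 * Cstar) := by simp
      _ = max 1 (2 * Cstar) / ν * ν ^ 1 := by field_simp
      _ ≤ max 1 (2 * Cstar) / ν * ν ^ m := 
        mul_le_mul_of_nonneg_left (pow_le_pow_of_le_one hν0.le hν1.le hm) (by positivity)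
  · have hNn : N < n := by omega
    have hnN : n - N = m - 1 := by omega
    refine ⟨condProb (p fun v => ω (v + ∑ k ∈ range N, wb k)) (fun k => wb (N + k)) (m - 1),
      Cstar * ν ^ (m - 1), fun u hu => ?_, ?_, ?_⟩
    · have h := hexp (replacePrefix u wb) (replacePrefix_mem u hwb) N n hNn
      rw [hnN, sum_range_replacePrefix, mem_pathsTo.1 hu] at h
      simp only [replacePrefix_add] at h
      exact h
    · have h := hexp wb hwb N n hNn
      rwa [hnN] at h
    · calc 2 * (Cstar * ν ^ (m - 1)) ≤ max 1 (2 * Cstar) * ν ^ (m - 1) := by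
            rw [← mul_assoc]
            gcongr
            exact le_max_right _ _
        _ = max 1 (2 * Cstar) / ν * ν ^ m := by
            rw [← Nat.sub_add_cancel hm.le, pow_succ, Nat.add_sub_cancel]
            field_simp

/-- If the conditional jump probabilities satisfy the weak-memory condition
(Exp), then the process loses memory of the distant past exponentially fast:
`|P*(z_{n+1} | z_{n-m+1},…,z_n, ω) − P*(z_{n+1} | z_1,…,z_n, ω)| ≤ C ν^m`.
Here `p ω l` denotes the probability of the finite word of jumps `l`, conditioning on
positions `z_{n-m+1},…,z_n` amounts to summing over all admissible prefixes of length
`n-m+1` arriving at `z_{n-m+1}`, and conditioning on all of `z_1,…,z_n` determines the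
whole word. -/
theorem stmt3 {A : Type*} [MeasurableSpace A] {d : ℕ}
    (W : Finset (Fin d → ℤ))
    (P : Measure ((Fin d → ℤ) → A)) [IsProbabilityMeasure P]
    (p : ((Fin d → ℤ) → A) → List (Fin d → ℤ) → ℝ)
    (hNil : ∀ ω, p ω [] = 1)
    (hCompat : ∀ ω l, p ω l = ∑ w ∈ W, p ω (l ++ [w]))
    (hPos : ∀ᵐ ω ∂P, ∀ l : List (Fin d → ℤ), (∀ v ∈ l, v ∈ W) → 0 < p ω l)
    (Cstar ν : ℝ) (hCstar : 0 < Cstar) (hν : ν ∈ Set.Ioo (0 : ℝ) 1)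
    (hExp : ∀ᵐ ω ∂P, ∀ wb : ℕ → Fin d → ℤ, (∀ k, wb k ∈ W) →
      ∀ m n : ℕ, m < n →
        |p ω (List.ofFn fun k : Fin (n + 1) => wb (k : ℕ)) /
            p ω (List.ofFn fun k : Fin n => wb (k : ℕ)) -
          p (fun v => ω (v + ∑ k ∈ range m, wb k))
              (List.ofFn fun k : Fin (n - m + 1) => wb (m + (k : ℕ))) /
            p (fun v => ω (v + ∑ k ∈ range m, wb k))
              (List.ofFn fun k : Fin (n - m) => wb (m + (k : ℕ)))| ≤ Cstar * ν ^ (n - m)) :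
    ∃ C > 0, ∀ᵐ ω ∂P, ∀ wb : ℕ → Fin d → ℤ, (∀ k, wb k ∈ W) →
      ∀ m n : ℕ, m ≤ n →
        |(∑ u ∈ Finset.univ.filter (fun u : Fin (n - m + 1) → W =>
              (∑ k, (u k : Fin d → ℤ)) = ∑ k ∈ range (n - m + 1), wb k),
            p ω (List.ofFn fun k : Fin (n + 1) =>
              if h : (k : ℕ) < n - m + 1 then (u ⟨(k : ℕ), h⟩ : Fin d → ℤ)
              else wb (k : ℕ))) /
          (∑ u ∈ Finset.univ.filter (fun u : Fin (n - m + 1) → W =>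
              (∑ k, (u k : Fin d → ℤ)) = ∑ k ∈ range (n - m + 1), wb k),
            p ω (List.ofFn fun k : Fin n =>
              if h : (k : ℕ) < n - m + 1 then (u ⟨(k : ℕ), h⟩ : Fin d → ℤ)
              else wb (k : ℕ))) -
          p ω (List.ofFn fun k : Fin (n + 1) => wb (k : ℕ)) /
            p ω (List.ofFn fun k : Fin n => wb (k : ℕ))| ≤ C * ν ^ m :=
  stmt3_general W P p hCompat hPos Cstar ν hν hExp
end

section
/- Let d = 1 and suppose the assumptions of the ergodicity theorem hold (so (Ω*, F*, Q*) is ergodic and z_n/n → V a.s.). If V = 0, then the walk is recurrent: z_n = 0 for infinitely many n, P*-almost surely. -/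
open MeasureTheory Filter

/-- The shift map of the environment seen from the particle in dimension one. -/
def FstarZ {A : Type*} (q : (ℤ → A) × (ℕ → ℤ)) : (ℤ → A) × (ℕ → ℤ) :=
  ((fun v => q.1 (v + q.2 0)), fun k => q.2 (k + 1))

/-!
Atkinson's argument. Call `x` non-returning if its walk `S_m x` (`m ≥ 1`) never vanishes. If
`T^[i] x` is non-returning and `i < j`, then `S_i x ≠ S_j x`; so the times `k < n` at which the
orbit visits the non-returning set `R` carry pairwise distinct integer values `S_k x`. Ergodicity
makes the number of such visits about `n μ(R)`, while zero drift confines all `S_k x`, `k < n`,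
to an interval of length `o(n)`; hence `μ(R) = 0`. Then almost surely no iterate is
non-returning, so after every zero of the walk there is a later one.

The ergodic bounds come from the maximal ergodic theorem: `{x | S_n f x bounded above}` is
`T`-invariant, hence null or conull, and if it were null the maximal ergodic theorem would give
`0 ≤ ∫ f`.
-/

open Finset Function

section Birkhoff

variable {α : Type*} {T : α → α} {f : α → ℝ}

/-- Including the empty sum `S_0 f = 0` makes it nonnegative, which Garsia's argument needs. -/
noncomputable def birkhoffMax (T : α → α) (f : α → ℝ) (n : ℕ) (x : α) : ℝ :=
  (range (n + 1)).sup' nonempty_range_add_one fun k => birkhoffSum T f k x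

theorem birkhoffSum_le_birkhoffMax {k n : ℕ} (hk : k ≤ n) (x : α) :
    birkhoffSum T f k x ≤ birkhoffMax T f n x :=
  le_sup' (fun k => birkhoffSum T f k x) (mem_range.2 (Nat.lt_succ_of_le hk))

theorem birkhoffMax_nonneg (n : ℕ) (x : α) : 0 ≤ birkhoffMax T f n x :=
  (birkhoffSum_zero T f x).symm.le.trans (birkhoffSum_le_birkhoffMax n.zero_le x)

theorem monotone_birkhoffMax (x : α) : Monotone fun n => birkhoffMax T f n x :=
  fun _ _ hmn => sup'_mono _ (range_subset_range.2 (Nat.succ_le_succ hmn)) _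

theorem birkhoffMax_le_add_birkhoffMax_apply {n : ℕ} {x : α} (hx : 0 < birkhoffMax T f n x) :
    birkhoffMax T f n x ≤ f x + birkhoffMax T f n (T x) := by
  obtain ⟨k, hk, hmax⟩ := exists_mem_eq_sup' nonempty_range_add_one fun k => birkhoffSum T f k x
  rw [birkhoffMax, hmax] at hx ⊢
  cases k with
  | zero => simp at hx
  | succ j =>
    rw [birkhoffSum_succ']
    gcongr
    exact birkhoffSum_le_birkhoffMax (by simp at hk; omega) _

theorem bddAbove_range_birkhoffSum_apply_iff (x : α) :
    BddAbove (Set.range fun n => birkhoffSum T f n (T x)) ↔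
      BddAbove (Set.range fun n => birkhoffSum T f n x) := by
  simp only [bddAbove_def, Set.forall_mem_range]
  constructor
  · rintro ⟨C, hC⟩
    refine ⟨max 0 (f x + C), fun n => ?_⟩
    cases n with
    | zero => simp
    | succ n => exact le_max_of_le_right (by rw [birkhoffSum_succ']; linarith [hC n])
  · rintro ⟨C, hC⟩
    refine ⟨C - f x, fun n => ?_⟩
    linarith [birkhoffSum_succ' T f n x, hC (n + 1)]

theorem birkhoffSum_sub_const (r : ℝ) (n : ℕ) (x : α) :
    birkhoffSum T (fun y => f y - r) n x = birkhoffSum T f n x - n * r := by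
  simp [birkhoffSum, sum_sub_distrib]

variable [MeasurableSpace α] {μ : Measure α}

theorem measurable_birkhoffSum {M : Type*} [AddCommMonoid M] [MeasurableSpace M]
    [MeasurableAdd₂ M] {g : α → M} (hT : Measurable T) (hg : Measurable g) (n : ℕ) :
    Measurable (birkhoffSum T g n) :=
  Finset.measurable_sum _ fun k _ => hg.comp (hT.iterate k)

theorem integrable_birkhoffSum {E : Type*} [NormedAddCommGroup E] {g : α → E}
    (hT : MeasurePreserving T μ μ) (hg : Integrable g μ) (n : ℕ) :
    Integrable (birkhoffSum T g n) μ :=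
  integrable_finsetSum _ fun k _ => (hT.iterate k).integrable_comp_of_integrable hg

theorem measurable_birkhoffMax (hT : Measurable T) (hf : Measurable f) (n : ℕ) :
    Measurable (birkhoffMax T f n) :=
  Finset.measurable_range_sup'' fun k _ => measurable_birkhoffSum hT hf k

theorem integrable_birkhoffMax (hT : MeasurePreserving T μ μ) (hf : Measurable f)
    (hfi : Integrable f μ) (n : ℕ) : Integrable (birkhoffMax T f n) μ := by
  refine Integrable.mono' (integrable_finsetSum (range (n + 1)) fun k _ =>
    (integrable_birkhoffSum hT hfi k).abs)
    (measurable_birkhoffMax hT.measurable hf n).aestronglyMeasurable (ae_of_all _ fun x => ?_)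
  rw [Real.norm_of_nonneg (birkhoffMax_nonneg n x)]
  refine sup'_le _ _ fun k hk => (le_abs_self _).trans ?_
  exact single_le_sum (f := fun k => |birkhoffSum T f k x|) (fun _ _ => abs_nonneg _) hk

theorem setIntegral_birkhoffMax_pos_nonneg (hT : MeasurePreserving T μ μ) (hf : Measurable f)
    (hfi : Integrable f μ) (n : ℕ) :
    0 ≤ ∫ x in {x | 0 < birkhoffMax T f n x}, f x ∂μ := by
  set M := birkhoffMax T f n
  have hM : Integrable M μ := integrable_birkhoffMax hT hf hfi n
  have hMT : Integrable (M ∘ T) μ := hT.integrable_comp_of_integrable hM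
  have hE : MeasurableSet {x | 0 < M x} :=
    measurableSet_lt measurable_const (measurable_birkhoffMax hT.measurable hf n)
  have hcomp : ∫ x, M (T x) ∂μ = ∫ x, M x ∂μ := by
    rw [← integral_map hT.aemeasurable (by rw [hT.map_eq]; exact hM.aestronglyMeasurable),
      hT.map_eq]
  calc 0 = ∫ x, M x ∂μ - ∫ x, M (T x) ∂μ := by rw [hcomp, sub_self]
    _ ≤ ∫ x in {x | 0 < M x}, M x ∂μ - ∫ x in {x | 0 < M x}, M (T x) ∂μ := by
      rw [← setIntegral_eq_integral_of_forall_compl_eq_zero (f := M) (s := {x | 0 < M x})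
        fun x hx => le_antisymm (not_lt.1 hx) (birkhoffMax_nonneg n x)]
      gcongr
      · exact ae_of_all _ fun x => birkhoffMax_nonneg n (T x)
      · exact Measure.restrict_le_self
    _ = ∫ x in {x | 0 < M x}, (M x - M (T x)) ∂μ :=
      (integral_sub hM.integrableOn hMT.integrableOn).symm
    _ ≤ ∫ x in {x | 0 < M x}, f x ∂μ :=
      setIntegral_mono_on (hM.sub hMT).integrableOn hfi.integrableOn hE fun x hx =>
        sub_le_iff_le_add.2 (birkhoffMax_le_add_birkhoffMax_apply hx)

/-- The maximal ergodic theorem. -/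
theorem integral_nonneg_of_ae_exists_birkhoffSum_pos (hT : MeasurePreserving T μ μ)
    (hf : Measurable f) (hfi : Integrable f μ) (h : ∀ᵐ x ∂μ, ∃ n, 0 < birkhoffSum T f n x) :
    0 ≤ ∫ x, f x ∂μ := by
  set E : ℕ → Set α := fun n => {x | 0 < birkhoffMax T f n x}
  have hE : ∀ n, MeasurableSet (E n) := fun n =>
    measurableSet_lt measurable_const (measurable_birkhoffMax hT.measurable hf n)
  have hE_mono : Monotone E := fun m n hmn x hx => hx.trans_le (monotone_birkhoffMax x hmn)
  have hE_univ : ⋃ n, E n =ᵐ[μ] (Set.univ : Set α) := by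
    refine eventuallyEq_univ.2 (h.mono fun x ⟨n, hn⟩ => Set.mem_iUnion.2 ⟨n, ?_⟩)
    exact hn.trans_le (birkhoffSum_le_birkhoffMax le_rfl x)
  have hlim := tendsto_setIntegral_of_monotone hE hE_mono hfi.integrableOn
  rw [Measure.restrict_congr_set hE_univ, Measure.restrict_univ] at hlim
  exact ge_of_tendsto hlim (Eventually.of_forall fun n =>
    setIntegral_birkhoffMax_pos_nonneg hT hf hfi n)

theorem Ergodic.ae_bddAbove_birkhoffSum_of_integral_neg (hT : Ergodic T μ) (hf : Measurable f)
    (hfi : Integrable f μ) (hneg : ∫ x, f x ∂μ < 0) :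
    ∀ᵐ x ∂μ, BddAbove (Set.range fun n => birkhoffSum T f n x) := by
  set E := {x | BddAbove (Set.range fun n => birkhoffSum T f n x)}
  have hE : MeasurableSet E :=
    measurableSet_bddAbove_range (measurable_birkhoffSum hT.measurable hf)
  have hE_inv : T ⁻¹' E = E := Set.ext bddAbove_range_birkhoffSum_apply_iff
  rcases hT.ae_empty_or_univ hE hE_inv with hE_null | hE_full
  · refine absurd (integral_nonneg_of_ae_exists_birkhoffSum_pos hT.toMeasurePreserving hf hfi ?_)
      hneg.not_ge
    filter_upwards [measure_eq_zero_iff_ae_notMem.1 (ae_eq_empty.1 hE_null)] with x hx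
    obtain ⟨_, ⟨n, rfl⟩, hn⟩ := not_bddAbove_iff.1 hx 0
    exact ⟨n, hn⟩
  · exact eventuallyEq_univ.1 hE_full

theorem Ergodic.ae_exists_birkhoffSum_le [IsProbabilityMeasure μ] (hT : Ergodic T μ)
    (hf : Measurable f) (hfi : Integrable f μ) {r : ℝ} (hr : ∫ x, f x ∂μ < r) :
    ∀ᵐ x ∂μ, ∃ C, ∀ n : ℕ, birkhoffSum T f n x ≤ n * r + C := by
  have hneg : ∫ x, (f x - r) ∂μ < 0 := by
    rw [integral_sub hfi (integrable_const r)]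
    simpa using hr
  filter_upwards [hT.ae_bddAbove_birkhoffSum_of_integral_neg (hf.sub_const r)
    (hfi.sub (integrable_const r)) hneg] with x ⟨C, hC⟩
  refine ⟨C, fun n => ?_⟩
  linarith [birkhoffSum_sub_const (T := T) (f := f) r n x, hC ⟨n, rfl⟩]

theorem Ergodic.ae_exists_le_birkhoffSum [IsProbabilityMeasure μ] (hT : Ergodic T μ)
    (hf : Measurable f) (hfi : Integrable f μ) {r : ℝ} (hr : r < ∫ x, f x ∂μ) :
    ∀ᵐ x ∂μ, ∃ C, ∀ n : ℕ, n * r - C ≤ birkhoffSum T f n x := by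
  filter_upwards [hT.ae_exists_birkhoffSum_le hf.neg hfi.neg (r := -r)
    (by simpa [integral_neg] using hr)] with x ⟨C, hC⟩
  refine ⟨C, fun n => ?_⟩
  linarith [birkhoffSum_neg T f n x, hC n]

end Birkhoff

theorem card_filter_range_le_of_abs_le {s : ℕ → ℤ} {P : ℕ → Prop} [DecidablePred P]
    (hP : ∀ i j, P i → i < j → s i ≠ s j) {n : ℕ} {B : ℝ} (hB₀ : 0 ≤ B)
    (hB : ∀ k < n, |(s k : ℝ)| ≤ B) : (#{k ∈ range n | P k} : ℝ) ≤ 2 * B + 1 := by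
  set F := {k ∈ range n | P k}
  have hinj : Set.InjOn s F := by
    intro i hi j hj hij
    by_contra hne
    rcases lt_or_gt_of_ne hne with hlt | hlt
    · exact hP i j (mem_filter.1 hi).2 hlt hij
    · exact hP j i (mem_filter.1 hj).2 hlt hij.symm
  have hmaps : Set.MapsTo s F (Icc (-⌊B⌋) ⌊B⌋) := by
    intro k hk
    have hk := abs_le.1 (hB k (mem_range.1 (mem_filter.1 hk).1))
    simp only [coe_Icc, Set.mem_Icc, Int.le_floor, neg_le, Int.cast_neg]
    exact ⟨by linarith, hk.2⟩
  have hcard : (#F : ℤ) ≤ ⌊B⌋ + 1 - -⌊B⌋ := by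
    rw [← Int.card_Icc_of_le _ _ (by linarith [Int.floor_nonneg.2 hB₀])]
    exact_mod_cast card_le_card_of_injOn s hmaps hinj
  have hfloor : (⌊B⌋ : ℝ) ≤ B := Int.floor_le B
  have hcardR : (#F : ℝ) ≤ ⌊B⌋ + 1 - -⌊B⌋ := by exact_mod_cast hcard
  linarith

section Recurrence

variable {α : Type*} {T : α → α} {g : α → ℤ} {x : α}

def nonReturnSet (T : α → α) (g : α → ℤ) : Set α :=
  {x | ∀ m, birkhoffSum T g (m + 1) x ≠ 0}

theorem birkhoffSum_ne_of_iterate_mem_nonReturnSet {i j : ℕ} (hij : i < j)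
    (hi : T^[i] x ∈ nonReturnSet T g) : birkhoffSum T g i x ≠ birkhoffSum T g j x := by
  obtain ⟨m, rfl⟩ := Nat.exists_eq_add_of_lt hij
  rw [add_assoc, birkhoffSum_add]
  simpa using hi m

theorem infinite_setOf_birkhoffSum_eq_zero (h : ∀ k, T^[k] x ∉ nonReturnSet T g) :
    {n | birkhoffSum T g n x = 0}.Infinite := by
  have hnext : ∀ n, birkhoffSum T g n x = 0 → ∃ m, n < m ∧ birkhoffSum T g m x = 0 := by
    intro n hn
    obtain ⟨m, hm⟩ : ∃ m, birkhoffSum T g (m + 1) (T^[n] x) = 0 := by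
      simpa [nonReturnSet] using h n
    exact ⟨n + (m + 1), by omega, by rw [birkhoffSum_add, hn, hm, add_zero]⟩
  refine Set.infinite_of_not_bddAbove fun hbdd => ?_
  obtain ⟨m, hm, hm0⟩ := hnext _ (Nat.sSup_mem ⟨0, birkhoffSum_zero T g x⟩ hbdd)
  exact hm.not_ge (le_csSup hbdd hm0)

variable [MeasurableSpace α] {μ : Measure α}

theorem measurableSet_nonReturnSet (hT : Measurable T) (hg : Measurable g) :
    MeasurableSet (nonReturnSet T g) := by
  rw [nonReturnSet, Set.ofPred_forall]
  exact MeasurableSet.iInter fun m =>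
    (measurable_birkhoffSum hT hg (m + 1)) (measurableSet_singleton 0).compl

theorem measure_nonReturnSet_eq_zero [IsProbabilityMeasure μ] (hT : Ergodic T μ)
    (hg : Measurable g) (hgi : Integrable (fun x => (g x : ℝ)) μ)
    (h₀ : ∫ x, (g x : ℝ) ∂μ = 0) : μ (nonReturnSet T g) = 0 := by
  classical
  set R := nonReturnSet T g
  have hR : MeasurableSet R := measurableSet_nonReturnSet hT.measurable hg
  by_contra hR₀
  set ρ := μ.real R
  have hρ : 0 < ρ := ENNReal.toReal_pos hR₀ (measure_ne_top μ R)
  have hφ : Measurable fun x => (g x : ℝ) := measurable_from_top.comp hg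
  have hwalk : ∀ n y, birkhoffSum T (fun x => (g x : ℝ)) n y = birkhoffSum T g n y := by
    simp [birkhoffSum]
  have hvisits : ∀ n y, birkhoffSum T (R.indicator fun _ => (1 : ℝ)) n y =
      #{k ∈ range n | T^[k] y ∈ R} := by
    simp [birkhoffSum, Set.indicator_apply]
  have hvisits_lower := hT.ae_exists_le_birkhoffSum (measurable_const.indicator hR)
    ((integrable_const 1).indicator hR) (r := ρ / 2)
    (by rw [integral_indicator_const _ hR, smul_eq_mul, mul_one]; linarith)
  have hwalk_upper := hT.ae_exists_birkhoffSum_le hφ hgi (r := ρ / 8) (by linarith)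
  have hwalk_lower := hT.ae_exists_le_birkhoffSum hφ hgi (r := -(ρ / 8)) (by linarith)
  obtain ⟨x, ⟨C₁, hC₁⟩, ⟨C₂, hC₂⟩, ⟨C₃, hC₃⟩⟩ :=
    (hvisits_lower.and (hwalk_upper.and hwalk_lower)).exists
  simp only [hvisits, hwalk] at hC₁ hC₂ hC₃
  have hC₂₀ : 0 ≤ C₂ := by simpa using hC₂ 0
  have hC₃₀ : 0 ≤ C₃ := by simpa using hC₃ 0
  -- Before time `n` there are at least `n ρ / 2 - C₁` visits to `R`, with distinct values of the
  -- walk in an interval of `n ρ / 4 + O(1)` integers: impossible for large `n`.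
  obtain ⟨n, hn⟩ := exists_nat_gt ((C₁ + 2 * (C₂ + C₃) + 1) / (ρ / 4))
  have hcard := card_filter_range_le_of_abs_le (s := fun k => birkhoffSum T g k x)
    (P := fun k => T^[k] x ∈ R)
    (fun i j hi hij => birkhoffSum_ne_of_iterate_mem_nonReturnSet hij hi)
    (n := n) (B := n * (ρ / 8) + C₂ + C₃) (by positivity) fun k hk => by
      have hkn : (k : ℝ) * (ρ / 8) ≤ n * (ρ / 8) := by gcongr
      exact abs_le.2 ⟨by linarith [hC₃ k], by linarith [hC₂ k]⟩
  rw [div_lt_iff₀ (by positivity)] at hn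
  linarith [hC₁ n]

theorem Ergodic.ae_infinite_setOf_birkhoffSum_eq_zero [IsProbabilityMeasure μ]
    (hT : Ergodic T μ) (hg : Measurable g) (hgi : Integrable (fun x => (g x : ℝ)) μ)
    (h₀ : ∫ x, (g x : ℝ) ∂μ = 0) : ∀ᵐ x ∂μ, {n | birkhoffSum T g n x = 0}.Infinite := by
  have hR := measure_nonReturnSet_eq_zero hT hg hgi h₀
  have hvisits : ∀ᵐ x ∂μ, ∀ k, T^[k] x ∉ nonReturnSet T g := ae_all_iff.2 fun k =>
    measure_eq_zero_iff_ae_notMem.1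
      ((hT.toMeasurePreserving.iterate k).quasiMeasurePreserving.preimage_null hR)
  exact hvisits.mono fun x hx => infinite_setOf_birkhoffSum_eq_zero hx

end Recurrence

theorem FstarZ_iterate_snd {A : Type*} (q : (ℤ → A) × (ℕ → ℤ)) (k m : ℕ) :
    (FstarZ^[k] q).2 m = q.2 (m + k) := by
  induction k generalizing q with
  | zero => rfl
  | succ k ih => rw [iterate_succ_apply, ih]; rfl

theorem birkhoffSum_FstarZ {A : Type*} (q : (ℤ → A) × (ℕ → ℤ)) (n : ℕ) :
    birkhoffSum FstarZ (fun q : (ℤ → A) × (ℕ → ℤ) => q.2 0) n q = ∑ k ∈ range n, q.2 k :=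
  sum_congr rfl fun k _ => (FstarZ_iterate_snd q k 0).trans (congrArg q.2 (zero_add k))

theorem stmt14_general {A : Type*} [MeasurableSpace A]
    (Pstar Qstar : Measure ((ℤ → A) × (ℕ → ℤ)))
    [IsProbabilityMeasure Qstar]
    (hErg : Ergodic FstarZ Qstar)
    (hPQ : Pstar ≪ Qstar)
    (hInt : Integrable (fun q : (ℤ → A) × (ℕ → ℤ) => ((q.2 0 : ℤ) : ℝ)) Qstar)
    (hV : ∫ q : (ℤ → A) × (ℕ → ℤ), ((q.2 0 : ℤ) : ℝ) ∂Qstar = 0) :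
    ∀ᵐ q ∂Pstar, {n : ℕ | (∑ k ∈ Finset.range n, q.2 k) = 0}.Infinite := by
  have hstep_meas : Measurable fun q : (ℤ → A) × (ℕ → ℤ) => q.2 0 :=
    (measurable_pi_apply 0).comp measurable_snd
  have hrec := hErg.ae_infinite_setOf_birkhoffSum_eq_zero hstep_meas hInt hV
  exact hPQ.ae_le (hrec.mono fun q hq => by simpa only [birkhoffSum_FstarZ] using hq)

/-- In dimension `d = 1`, if `(Ω*, F*, Q*)` is ergodic and measure
preserving, `Q*` is equivalent to `P*`, and the drift `V = ∫ w̄₀ dQ*` vanishes, then the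
walk `z_n = w̄₀ + … + w̄_{n−1}` is recurrent: `z_n = 0` infinitely often, `P*`-a.s. -/
theorem stmt14 {A : Type*} [MeasurableSpace A]
    (Pstar Qstar : Measure ((ℤ → A) × (ℕ → ℤ)))
    [IsProbabilityMeasure Pstar] [IsProbabilityMeasure Qstar]
    (hMP : MeasurePreserving FstarZ Qstar Qstar)
    (hErg : Ergodic FstarZ Qstar)
    (hQP : Qstar ≪ Pstar) (hPQ : Pstar ≪ Qstar)
    (hInt : Integrable (fun q : (ℤ → A) × (ℕ → ℤ) => ((q.2 0 : ℤ) : ℝ)) Qstar)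
    (hV : ∫ q : (ℤ → A) × (ℕ → ℤ), ((q.2 0 : ℤ) : ℝ) ∂Qstar = 0) :
    ∀ᵐ q ∂Pstar, {n : ℕ | (∑ k ∈ Finset.range n, q.2 k) = 0}.Infinite :=
  stmt14_general Pstar Qstar hErg hPQ hInt hV
end

section
/- For the β-transformation cocycle: each map φ_n^{x,σ}(β) = T_σ^n(x) (viewing the n-th image of x ∈ (0,1] as a function of the parameter β, where T_{σ_i}(y) = β_{σ_i} y mod 1 with β_{σ_i} ∈ {β, ϖβ}) is C¹ and strictly increasing on each parameter interval I_{i_1,…,i_n}^{x,σ} on which all the integer parts ⌊β_{σ_k} φ_{k−1}^{x,σ}(β)⌋ = i_k are constant, and its derivative satisfies (φ_n^{x,σ})'(β) ≥ β^{n−1} x. -/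
/-- The parameter-dependent orbit `φ_n^{x,σ}(β) = T_σ^n(x)` for β-transformations
`T(y) = β' y mod 1` with `β' = ϖβ` or `β` according to `σ`. -/
noncomputable def phiBeta (w x : ℝ) (σ : ℕ → Bool) : ℕ → ℝ → ℝ
  | 0, _ => x
  | n + 1, β => Int.fract ((if σ (n + 1) = true then w * β else β) * phiBeta w x σ n β)

/-!
On a set where the integer parts are locked, `φ_{n+1} = β_{σ_{n+1}} φ_n - i_n`. Since
`β ↦ β_{σ_{n+1}}` is strictly increasing and `φ_n ≥ 0` is strictly increasing (or the constant
`x > 0` when `n = 0`), strict monotonicity propagates by induction, and so does differentiability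
by the product rule. The derivative satisfies
`D_{n+1} = β_{σ_{n+1}}' φ_n + β_{σ_{n+1}} D_n ≥ β D_n`, with `D_1 ≥ x`, whence `D_n ≥ β^{n-1} x`.
-/

/-- `β_{σ_k}` in the paper's notation, for `b = σ_k`. -/
def betaSel (w : ℝ) (b : Bool) (β : ℝ) : ℝ := if b = true then w * β else β

/-- The set `I^{x,σ}_{i_1,…,i_n} ∩ (1, ∞)`; the paper's `i_{k+1}` is `i k` here. -/
def lockSet (w x : ℝ) (σ : ℕ → Bool) (i : ℕ → ℤ) (n : ℕ) : Set ℝ :=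
  {β : ℝ | 1 < β ∧ ∀ k < n, ⌊betaSel w (σ (k + 1)) β * phiBeta w x σ k β⌋ = i k}

noncomputable def phiBetaDeriv (w x : ℝ) (σ : ℕ → Bool) : ℕ → ℝ → ℝ
  | 0, _ => 0
  | n + 1, β => betaSel w (σ (n + 1)) 1 * phiBeta w x σ n β
      + betaSel w (σ (n + 1)) β * phiBetaDeriv w x σ n β

section

variable {w x : ℝ} {b : Bool} {σ : ℕ → Bool} {i : ℕ → ℤ} {n : ℕ} {β : ℝ}

theorem strictMono_betaSel (hw : 0 < w) : StrictMono (betaSel w b) := by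
  cases b
  · exact strictMono_id
  · exact strictMono_mul_left_of_pos hw

theorem betaSel_nonneg (hw : 0 ≤ w) (hβ : 0 ≤ β) : 0 ≤ betaSel w b β := by
  cases b
  · exact hβ
  · exact mul_nonneg hw hβ

theorem le_betaSel (hw : 1 ≤ w) (hβ : 0 ≤ β) : β ≤ betaSel w b β := by
  cases b
  · exact le_rfl
  · exact le_mul_of_one_le_left hβ hw

theorem hasDerivAt_betaSel : HasDerivAt (betaSel w b) (betaSel w b 1) β := by
  cases b
  · exact hasDerivAt_id β
  · show HasDerivAt (fun y => w * y) (w * 1) β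
    simpa using (hasDerivAt_id β).const_mul w

theorem continuous_betaSel : Continuous (betaSel w b) :=
  continuous_iff_continuousAt.2 fun _ => hasDerivAt_betaSel.continuousAt

theorem phiBeta_nonneg (hx : 0 ≤ x) : ∀ n, 0 ≤ phiBeta w x σ n β
  | 0 => hx
  | _ + 1 => Int.fract_nonneg _

theorem lockSet_succ_subset : lockSet w x σ i (n + 1) ⊆ lockSet w x σ i n :=
  fun _ hβ => ⟨hβ.1, fun k hk => hβ.2 k (Nat.lt_succ_of_lt hk)⟩

theorem phiBeta_succ_of_mem_lockSet (hβ : β ∈ lockSet w x σ i (n + 1)) :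
    phiBeta w x σ (n + 1) β = betaSel w (σ (n + 1)) β * phiBeta w x σ n β - i n := by
  show Int.fract (betaSel w (σ (n + 1)) β * phiBeta w x σ n β) = _
  rw [← Int.self_sub_floor, hβ.2 n n.lt_succ_self]

theorem strictMonoOn_phiBeta_succ
    (h : StrictMonoOn (fun β => betaSel w (σ (n + 1)) β * phiBeta w x σ n β)
      (lockSet w x σ i n)) :
    StrictMonoOn (phiBeta w x σ (n + 1)) (lockSet w x σ i (n + 1)) := by
  intro β₁ hβ₁ β₂ hβ₂ hlt
  rw [phiBeta_succ_of_mem_lockSet hβ₁, phiBeta_succ_of_mem_lockSet hβ₂]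
  exact sub_lt_sub_right (h (lockSet_succ_subset hβ₁) (lockSet_succ_subset hβ₂) hlt) _

theorem strictMonoOn_betaSel_mul_phiBeta (hw : 0 < w) (hx : 0 < x) :
    ∀ n, StrictMonoOn (fun β => betaSel w (σ (n + 1)) β * phiBeta w x σ n β)
      (lockSet w x σ i n)
  | 0 => fun _ _ _ _ hlt => mul_lt_mul_of_pos_right (strictMono_betaSel hw hlt) hx
  | n + 1 => by
    have hφ := strictMonoOn_phiBeta_succ (strictMonoOn_betaSel_mul_phiBeta hw hx n)
    intro β₁ hβ₁ β₂ hβ₂ hlt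
    exact mul_lt_mul'' (strictMono_betaSel hw hlt) (hφ hβ₁ hβ₂ hlt)
      (betaSel_nonneg hw.le (zero_le_one.trans hβ₁.1.le)) (phiBeta_nonneg hx.le _)

theorem hasDerivWithinAt_phiBeta :
    ∀ {n}, β ∈ lockSet w x σ i n →
      HasDerivWithinAt (phiBeta w x σ n) (phiBetaDeriv w x σ n β) (lockSet w x σ i n) β
  | 0, _ => hasDerivWithinAt_const β _ x
  | n + 1, hβ => by
    have hφ := (hasDerivWithinAt_phiBeta (lockSet_succ_subset hβ)).mono lockSet_succ_subset
    exact ((hasDerivAt_betaSel.hasDerivWithinAt.mul hφ).sub_const (i n : ℝ)).congr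
      (fun _ hy => phiBeta_succ_of_mem_lockSet hy) (phiBeta_succ_of_mem_lockSet hβ)

theorem continuousOn_phiBetaDeriv :
    ∀ n, ContinuousOn (phiBetaDeriv w x σ n) (lockSet w x σ i n)
  | 0 => continuousOn_const
  | n + 1 => by
    have hφ : ContinuousOn (phiBeta w x σ n) (lockSet w x σ i n) :=
      fun _ hβ => (hasDerivWithinAt_phiBeta hβ).continuousWithinAt
    exact ((continuousOn_const.mul hφ).add
      (continuous_betaSel.continuousOn.mul (continuousOn_phiBetaDeriv n))).mono
      lockSet_succ_subset

theorem pow_mul_le_phiBetaDeriv (hw : 1 ≤ w) (hx : 0 ≤ x) (hβ : 0 ≤ β) :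
    ∀ n, β ^ n * x ≤ phiBetaDeriv w x σ (n + 1) β
  | 0 => by
    simpa [phiBetaDeriv, phiBeta] using le_mul_of_one_le_left hx (le_betaSel hw zero_le_one)
  | n + 1 => by
    have ih := pow_mul_le_phiBetaDeriv hw hx hβ n
    have hD : 0 ≤ phiBetaDeriv w x σ (n + 1) β := (by positivity : 0 ≤ β ^ n * x).trans ih
    have hφ : 0 ≤ betaSel w (σ (n + 2)) 1 * phiBeta w x σ (n + 1) β :=
      mul_nonneg (betaSel_nonneg (zero_le_one.trans hw) zero_le_one) (phiBeta_nonneg hx _)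
    calc β ^ (n + 1) * x = β * (β ^ n * x) := by ring
      _ ≤ β * phiBetaDeriv w x σ (n + 1) β := mul_le_mul_of_nonneg_left ih hβ
      _ ≤ betaSel w (σ (n + 2)) β * phiBetaDeriv w x σ (n + 1) β :=
        mul_le_mul_of_nonneg_right (le_betaSel hw hβ) hD
      _ ≤ phiBetaDeriv w x σ (n + 2) β := le_add_of_nonneg_left hφ

end

/-- Each map `β ↦ φ_n^{x,σ}(β)` is `C¹` and strictly increasing on each
parameter interval on which all integer parts `⌊β_{σ_k} φ_{k−1}^{x,σ}(β)⌋ = i_k`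
(`k = 1, …, n`) are locked, with derivative bounded below by `β^{n−1} x`. -/
theorem stmt18 (w x : ℝ) (hw : 1 < w) (hx : x ∈ Set.Ioc (0 : ℝ) 1) (σ : ℕ → Bool)
    (n : ℕ) (hn : 1 ≤ n) (i : ℕ → ℤ) :
    StrictMonoOn (phiBeta w x σ n)
      {β : ℝ | 1 < β ∧ ∀ k < n,
        ⌊(if σ (k + 1) = true then w * β else β) * phiBeta w x σ k β⌋ = i k} ∧
    ∃ D : ℝ → ℝ,
      ContinuousOn D
        {β : ℝ | 1 < β ∧ ∀ k < n,
          ⌊(if σ (k + 1) = true then w * β else β) * phiBeta w x σ k β⌋ = i k} ∧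
      ∀ β ∈ {β : ℝ | 1 < β ∧ ∀ k < n,
          ⌊(if σ (k + 1) = true then w * β else β) * phiBeta w x σ k β⌋ = i k},
        HasDerivWithinAt (phiBeta w x σ n) (D β)
          {β : ℝ | 1 < β ∧ ∀ k < n,
            ⌊(if σ (k + 1) = true then w * β else β) * phiBeta w x σ k β⌋ = i k} β ∧
        β ^ (n - 1) * x ≤ D β := by
  obtain ⟨m, rfl⟩ : ∃ m, n = m + 1 := ⟨n - 1, by omega⟩
  change StrictMonoOn _ (lockSet w x σ i (m + 1)) ∧
    ∃ D : ℝ → ℝ, ContinuousOn D (lockSet w x σ i (m + 1)) ∧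
      ∀ β ∈ lockSet w x σ i (m + 1),
        HasDerivWithinAt _ (D β) (lockSet w x σ i (m + 1)) β ∧ β ^ (m + 1 - 1) * x ≤ D β
  refine ⟨strictMonoOn_phiBeta_succ (strictMonoOn_betaSel_mul_phiBeta (by linarith) hx.1 m),
    phiBetaDeriv w x σ (m + 1), continuousOn_phiBetaDeriv _,
    fun β hβ => ⟨hasDerivWithinAt_phiBeta hβ, ?_⟩⟩
  simpa using pow_mul_le_phiBetaDeriv hw.le hx.1.le (by linarith [hβ.1]) m
end
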